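/- arXiv:0902.0692 — 2 statements merged into one kernel-verified Lean document; each statement's English description precedes it below -/
import Mathlib

section
/- The polynomial f(x) = ∏_{i,j} x_{ij} (the product of all entries) is weakly primitive for the set of n×n integer matrices of determinant m (i.e. the gcd of its values on this set is 1) if and only if m ≡ 0 mod 2^(n-1). -/
open Matrix Finset

private lemma sum_split {n : ℕ} [NeZero n] (i : Fin n) (hi : i ≠ 0) (f g : Fin n → ℤ) :
    ∑ k, (if i = k then f k else if k = 0 then g k else 0) = f i + g 0 := by
  have h : ∀ k : Fin n, (if i = k then f k else if k = 0 then g k else 0)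
      = (if i = k then f k else 0) + (if k = 0 then g k else 0) := by
    intro k
    rcases eq_or_ne i k with rfl | h
    · simp [hi]
    · simp [h]
  rw [Finset.sum_congr rfl (fun k _ => h k), Finset.sum_add_distrib,
    Finset.sum_ite_eq, Finset.sum_ite_eq']
  simp

/-- determinant of `Z i j = σ i + [i = j] d i` with `σ 0 = 1`, `d 0 = 0`. -/
private lemma det_aux {n : ℕ} [NeZero n] (σ d : Fin n → ℤ) (hσ : σ 0 = 1) (hd : d 0 = 0) :
    (Matrix.of fun i j => σ i + if i = j then d i else 0).det
      = ∏ i, (if i = 0 then 1 else d i) := by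
  set E : Matrix (Fin n) (Fin n) ℤ :=
    Matrix.of fun i j => if i = j then 1 else if j = 0 then σ i else 0 with hE
  set M : Matrix (Fin n) (Fin n) ℤ :=
    Matrix.of fun i j => if i = 0 then 1 else if i = j then d i else 0 with hM
  have hEM : (Matrix.of fun i j => σ i + if i = j then d i else 0) = E * M := by
    ext i j
    rw [Matrix.of_apply, Matrix.mul_apply]
    rcases eq_or_ne i 0 with rfl | hi
    · have h : ∀ k : Fin n, E 0 k * M k j = if (0:Fin n) = k then M k j else 0 := by
        intro k
        rcases eq_or_ne (0:Fin n) k with rfl | hk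
        · simp [hE]
        · simp [hE, hk, Ne.symm hk]
      rw [Finset.sum_congr rfl (fun k _ => h k), Finset.sum_ite_eq]
      simp [hM, hσ, hd]
    · have h : ∀ k : Fin n, E i k * M k j
          = if i = k then (if k = 0 then 1 else if k = j then d k else 0)
            else if k = 0 then σ i * 1 else 0 := by
        intro k
        rcases eq_or_ne i k with rfl | h
        · simp [hE, hM]
        · rcases eq_or_ne k 0 with rfl | hk0
          · simp [hE, hM, h]
          · simp [hE, hM, h, hk0]
      rw [Finset.sum_congr rfl (fun k _ => h k), sum_split i hi _ _]
      simp [hi]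
      ring
  have hEdet : E.det = 1 := by
    rw [Matrix.det_of_lowerTriangular E]
    · apply Finset.prod_eq_one
      intro i _
      simp [hE]
    · intro i j hij
      have hij' : i < j := hij
      have h2 : j ≠ 0 := by
        rintro rfl
        simp [Fin.lt_def] at hij'
      simp [hE, ne_of_lt hij', h2]
  have hMdet : M.det = ∏ i, (if i = 0 then 1 else d i) := by
    rw [Matrix.det_of_upperTriangular]
    · apply Finset.prod_congr rfl
      intro i _
      rcases eq_or_ne i 0 with rfl | h
      · simp [hM]
      · simp [hM, h]
    · intro i j hij
      have hij' : (j : Fin n) < i := hij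
      have h1 : i ≠ 0 := by
        rintro rfl
        simp [Fin.lt_def] at hij'
      have h2 : i ≠ j := (ne_of_lt hij').symm
      simp [hM, h1, h2]
  rw [hEM, Matrix.det_mul, hEdet, hMdet, one_mul]

/-- a matrix with all odd entries has determinant divisible by 2^(n-1) -/
private lemma odd_matrix_det {n : ℕ} [NeZero n] (x : Matrix (Fin n) (Fin n) ℤ)
    (h : ∀ i j, Odd (x i j)) : (2 ^ (n - 1) : ℤ) ∣ x.det := by
  set F : Matrix (Fin n) (Fin n) ℤ :=
    Matrix.of fun i j => if i = j then 1 else if j = 0 then -1 else 0 with hF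
  set C : Matrix (Fin n) (Fin n) ℤ :=
    Matrix.of fun i j => if i = 0 then x 0 j else (x i j - x 0 j) / 2 with hC
  set D : Matrix (Fin n) (Fin n) ℤ :=
    Matrix.diagonal (fun i => if i = 0 then 1 else 2) with hD
  have key : F * x = D * C := by
    ext i j
    rw [Matrix.mul_apply, hD, Matrix.diagonal_mul]
    rcases eq_or_ne i 0 with rfl | hi
    · have h' : ∀ k : Fin n, F 0 k * x k j = if (0:Fin n) = k then x k j else 0 := by
        intro k
        rcases eq_or_ne (0:Fin n) k with rfl | hk
        · simp [hF]
        · simp [hF, hk, Ne.symm hk]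
      rw [Finset.sum_congr rfl (fun k _ => h' k), Finset.sum_ite_eq]
      simp [hC]
    · have h' : ∀ k : Fin n, F i k * x k j
          = if i = k then x k j else if k = 0 then -(x 0 j) else 0 := by
        intro k
        rcases eq_or_ne i k with rfl | hk
        · simp [hF]
        · rcases eq_or_ne k 0 with rfl | hk0
          · simp [hF, hk]
          · simp [hF, hk, hk0]
      rw [Finset.sum_congr rfl (fun k _ => h' k), sum_split i hi _ _]
      have hev : (2:ℤ) ∣ (x i j - x 0 j) := (Odd.sub_odd (h i j) (h 0 j)).two_dvd
      simp [hC, hi]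
      rw [Int.mul_ediv_cancel' hev]
      ring
  have hFdet : F.det = 1 := by
    rw [Matrix.det_of_lowerTriangular F]
    · apply Finset.prod_eq_one; intro i _; simp [hF]
    · intro i j hij
      have hij' : i < j := hij
      have h2 : j ≠ 0 := by
        rintro rfl
        simp [Fin.lt_def] at hij'
      simp [hF, ne_of_lt hij', h2]
  have hDdet : D.det = 2 ^ (n - 1) := by
    rw [hD, Matrix.det_diagonal]
    rw [← Finset.prod_erase_mul _ _ (Finset.mem_univ (0 : Fin n))]
    rw [Finset.prod_congr rfl (fun i hi => if_neg (Finset.mem_erase.mp hi).1)]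
    simp [Finset.prod_const, Finset.card_erase_of_mem]
  have hx : x.det = D.det * C.det := by
    have h2 := congrArg Matrix.det key
    rwa [Matrix.det_mul, Matrix.det_mul, hFdet, one_mul] at h2
  rw [hx, hDdet]
  exact Dvd.intro _ rfl

private lemma prod_aux (k : ℕ) (a b : ℤ) :
    (∏ i : Fin (k+2), (if i = 0 then (1:ℤ) else if i = 1 then a else b)) = a * b ^ k := by
  have h1 : ∀ i : Fin k, (i.succ.succ : Fin (k+2)) ≠ 1 := by
    intro i h
    have := congrArg Fin.val h
    simp [Fin.val_succ] at this
  simp only [Fin.prod_univ_succ]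
  simp [Fin.succ_ne_zero, Fin.succ_zero_eq_one, h1, Finset.prod_const]

private lemma odd_prime_not_dvd_two {p : ℤ} (hp : Prime p) (hpo : Odd p) : ¬ (p ∣ 2) := by
  intro hdvd
  have h1 : p.natAbs ∣ 2 := Int.natAbs_dvd_natAbs.mpr hdvd
  have h2 : p.natAbs = 1 ∨ p.natAbs = 2 := Nat.prime_two.eq_one_or_self_of_dvd _ h1
  rcases h2 with h2 | h2
  · exact hp.not_unit (Int.isUnit_iff_natAbs_eq.mpr h2)
  · have : Even p := Int.natAbs_even.mp (by rw [h2]; decide)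
    exact (Int.not_odd_iff_even.mpr this) hpo

/-- The polynomial `f(x) = ∏_{i,j} x_{ij}` is weakly primitive for the set of `n × n`
integer matrices of determinant `m` (the gcd of its values on this set is `1`, i.e. the
only common divisors of all values are units) if and only if `2^(n-1) ∣ m`. -/
theorem stmt1 (n : ℕ) (hn : 2 ≤ n) (m : ℤ) (hm : m ≠ 0) :
    (∀ d : ℤ,
        (∀ x : Matrix (Fin n) (Fin n) ℤ, x.det = m → d ∣ ∏ i, ∏ j, x i j) → IsUnit d)
      ↔ (2 ^ (n - 1) : ℤ) ∣ m := by
  obtain ⟨k, rfl⟩ : ∃ k, n = k + 2 := ⟨n - 2, by omega⟩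
  have hsub : k + 2 - 1 = k + 1 := rfl
  rw [hsub]
  have h01 : (0 : Fin (k+2)) ≠ 1 := by simp [Fin.ext_iff]
  constructor
  · -- if gcd is 1 then 2^(n-1) ∣ m
    intro H
    by_contra hnd
    have h2 : IsUnit (2:ℤ) := by
      apply H 2
      intro x hx
      by_cases hodd : ∀ i j, Odd (x i j)
      · exact absurd (hx ▸ odd_matrix_det x hodd) hnd
      · push_neg at hodd
        obtain ⟨i, j, hij⟩ := hodd
        have h2d : (2:ℤ) ∣ x i j := (Int.not_odd_iff_even.mp hij).two_dvd
        exact h2d.trans ((Finset.dvd_prod_of_mem _ (Finset.mem_univ j)).trans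
          (Finset.dvd_prod_of_mem _ (Finset.mem_univ i)))
    rw [Int.isUnit_iff] at h2
    omega
  · -- if 2^(n-1) ∣ m then gcd is 1
    intro hdvd d hd
    by_contra hdu
    obtain ⟨p, hp, hpd⟩ := Int.exists_prime_and_dvd
      (fun h => hdu (Int.isUnit_iff_natAbs_eq.mpr h))
    rcases Int.even_or_odd p with hpe | hpo
    · -- p even: use an all-odd matrix of determinant m
      obtain ⟨c, hc⟩ := hdvd
      set σ : Fin (k+2) → ℤ := fun _ => 1 with hσ
      set dv : Fin (k+2) → ℤ := fun i => if i = 0 then 0 else if i = 1 then 2*c else 2 with hdv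
      set Z : Matrix (Fin (k+2)) (Fin (k+2)) ℤ :=
        Matrix.of fun i j => σ i + if i = j then dv i else 0 with hZ
      have hdet : Z.det = m := by
        rw [hZ, det_aux σ dv rfl (by simp [hdv])]
        have : ∀ i : Fin (k+2), (if i = 0 then (1:ℤ) else dv i)
            = (if i = 0 then (1:ℤ) else if i = 1 then 2*c else 2) := by
          intro i
          rcases eq_or_ne i 0 with rfl | h
          · simp
          · simp [hdv, h]
        rw [Finset.prod_congr rfl (fun i _ => this i), prod_aux]
        rw [hc]; ring
      have hprod : p ∣ ∏ i, ∏ j, Z i j := hpd.trans (hd Z hdet)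
      obtain ⟨i, _, hi⟩ := (hp.dvd_finset_prod_iff _).mp hprod
      obtain ⟨j, _, hij⟩ := (hp.dvd_finset_prod_iff _).mp hi
      have hoddZ : Odd (Z i j) := by
        have hev : Even (if i = j then dv i else 0) := by
          rcases eq_or_ne i j with rfl | h
          · rw [if_pos rfl, hdv]
            dsimp only
            split_ifs
            · exact Even.zero
            · exact even_two_mul c
            · exact even_two
          · simp [h]
        have hZval : Z i j = 1 + (if i = j then dv i else 0) := by simp [hZ, hσ]
        rw [hZval]
        exact hev.one_add
      have heven : Even (Z i j) := by
        obtain ⟨t, ht⟩ := hpe.two_dvd.trans hij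
        exact ⟨t, by omega⟩
      exact (Int.not_odd_iff_even.mpr heven) hoddZ
    · -- p odd
      set cc : ℤ := if p ∣ m + 1 then 2 else 1 with hcc
      have hpcc : ¬ p ∣ cc := by
        rw [hcc]
        split_ifs
        · exact odd_prime_not_dvd_two hp hpo
        · exact fun h => hp.not_unit (isUnit_of_dvd_one h)
      have hpccm : ¬ p ∣ cc + m := by
        rw [hcc]
        split_ifs with h1
        · intro h2
          have h3 : p ∣ (2 + m) - (m + 1) := dvd_sub h2 h1
          rw [show (2 + m) - (m + 1) = (1:ℤ) by ring] at h3
          exact hp.not_unit (isUnit_of_dvd_one h3)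
        · intro h2
          exact h1 (by rwa [add_comm] at h2)
      set σ : Fin (k+2) → ℤ := fun i => if i = 1 then cc else 1 with hσ
      set dv : Fin (k+2) → ℤ := fun i => if i = 0 then 0 else if i = 1 then m else 1 with hdv
      set Z : Matrix (Fin (k+2)) (Fin (k+2)) ℤ :=
        Matrix.of fun i j => σ i + if i = j then dv i else 0 with hZ
      have hdet : Z.det = m := by
        rw [hZ, det_aux σ dv (by simp [hσ, h01]) (by simp [hdv])]
        have : ∀ i : Fin (k+2), (if i = 0 then (1:ℤ) else dv i)
            = (if i = 0 then (1:ℤ) else if i = 1 then m else 1) := by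
          intro i
          rcases eq_or_ne i 0 with rfl | h
          · simp
          · simp [hdv, h]
        rw [Finset.prod_congr rfl (fun i _ => this i), prod_aux]
        ring
      have hprod : p ∣ ∏ i, ∏ j, Z i j := hpd.trans (hd Z hdet)
      obtain ⟨i, _, hi⟩ := (hp.dvd_finset_prod_iff _).mp hprod
      obtain ⟨j, _, hij⟩ := (hp.dvd_finset_prod_iff _).mp hi
      have hZval : Z i j = σ i + (if i = j then dv i else 0) := by simp [hZ]
      rw [hZval] at hij
      rcases eq_or_ne i j with rfl | hne
      · rw [if_pos rfl] at hij
        rcases eq_or_ne i 0 with rfl | h0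
        · rw [hσ, hdv] at hij
          simp [h01] at hij
          exact hp.not_unit (isUnit_of_dvd_one hij)
        · rcases eq_or_ne i 1 with rfl | h1
          · rw [hσ, hdv] at hij
            simp [Ne.symm h01] at hij
            exact hpccm hij
          · rw [hσ, hdv] at hij
            simp [h0, h1] at hij
            exact odd_prime_not_dvd_two hp hpo hij
      · rw [if_neg hne, add_zero, hσ] at hij
        rcases eq_or_ne i 1 with rfl | h1
        · simp at hij
          exact hpcc hij
        · simp [h1] at hij
          exact hp.not_unit (isUnit_of_dvd_one hij)
end

section
/- Let B_t ⊆ G be an admissible family: O_ε·B_t·O_ε ⊆ B_{t+cε} for all t ≥ t₀, 0 < ε < ε₀, where O_ε is the ε-ball around the identity. Let Γ' ≤ G be discrete, y ∈ G, χ_ε = 1_{O_ε}/vol(O_ε), and φ^y_ε(gΓ') = ∑_{γ∈Γ'} χ_ε(gγy). Then for every h ∈ O_ε: ∫_{B_{t−cε}} φ^y_ε(g^{−1}hΓ') dvol(g) ≤ |B_t ∩ Γ'y| ≤ ∫_{B_{t+cε}} φ^y_ε(g^{−1}hΓ') dvol(g). -/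
/-! By left invariance of the metric, `χ_ε(g⁻¹ h γ y)` is the normalised indicator of the ball
`ball (h γ y) ε` evaluated at `g`, so integrating `φ^y_ε(g⁻¹ h)` over a set `s` gives
`∑_γ vol (s ∩ ball (h γ y) ε) / vol O_ε`. Each summand is at most `1`, and equals `1` when the
ball lies in `s`. Admissibility, applied to `h, h⁻¹ ∈ O_ε`, shows that a ball meeting `B_{t−cε}`
has `γ y ∈ B_t`, and that for `γ y ∈ B_t` the ball lies in `B_{t+cε}`. -/

open MeasureTheory Pointwise Metric

section LeftInvariantMetric

variable {G : Type*} [Group G] [PseudoMetricSpace G] [IsIsometricSMul G G]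

theorem inv_mul_mem_ball_one_iff {a b : G} {r : ℝ} : a⁻¹ * b ∈ ball (1 : G) r ↔ dist b a < r := by
  rw [mem_ball, ← dist_mul_left a, mul_inv_cancel_left, mul_one]

theorem inv_mem_ball_one_iff {a : G} {r : ℝ} : a⁻¹ ∈ ball (1 : G) r ↔ a ∈ ball (1 : G) r := by
  rw [← mul_one a⁻¹, inv_mul_mem_ball_one_iff, mem_ball, dist_comm]

theorem indicator_ball_one_inv_mul {M : Type*} [Zero M] (a : M) (g x : G) (r : ℝ) :
    (ball (1 : G) r).indicator (fun _ => a) (g⁻¹ * x) = (ball x r).indicator (fun _ => a) g := by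
  have hmem : g⁻¹ * x ∈ ball (1 : G) r ↔ g ∈ ball x r :=
    inv_mul_mem_ball_one_iff.trans mem_ball'.symm
  by_cases hg : g ∈ ball x r
  · rw [Set.indicator_of_mem (hmem.2 hg), Set.indicator_of_mem hg]
  · rw [Set.indicator_of_notMem (mt hmem.1 hg), Set.indicator_of_notMem hg]

theorem ball_mul_subset_of_ball_mul_mul_ball_subset {A A' : Set G} {r : ℝ}
    (hA : ball 1 r * A * ball 1 r ⊆ A') {h x : G} (hh : h ∈ ball (1 : G) r) (hx : x ∈ A) :
    ball (h * x) r ⊆ A' := fun g hg => by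
  have hg' : (h * x)⁻¹ * g ∈ ball (1 : G) r := inv_mul_mem_ball_one_iff.2 hg
  simpa only [mul_inv_cancel_left] using hA (Set.mul_mem_mul (Set.mul_mem_mul hh hx) hg')

theorem mem_of_ball_mul_mul_ball_subset {A A' : Set G} {r : ℝ}
    (hA : ball 1 r * A * ball 1 r ⊆ A') {h x : G} (hh : h ∈ ball (1 : G) r)
    (hx : ¬Disjoint A (ball (h * x) r)) : x ∈ A' := by
  obtain ⟨g, hgA, hg⟩ := Set.not_disjoint_iff.1 hx
  have hg' : g⁻¹ * (h * x) ∈ ball (1 : G) r := inv_mul_mem_ball_one_iff.2 (mem_ball'.1 hg)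
  have := hA (Set.mul_mem_mul (Set.mul_mem_mul (inv_mem_ball_one_iff.2 hh) hgA) hg')
  rwa [mul_assoc, mul_inv_cancel_left, inv_mul_cancel_left] at this

end LeftInvariantMetric

section IndicatorSums

variable {α ι : Type*} [MeasurableSpace α] {μ : Measure α} {X : ι → Set α} {s O : Set α}

theorem setIntegral_tsum_indicator_const (hX : ∀ i, MeasurableSet (X i))
    (hXfin : ∀ i, μ (X i) ≠ ⊤) (hs : MeasurableSet s) {S : Finset ι}
    (hS : ∀ i ∉ S, Disjoint s (X i)) (a : ℝ) :
    ∫ x in s, ∑' i, (X i).indicator (fun _ => a) x ∂μ = ∑ i ∈ S, a * μ.real (s ∩ X i) := by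
  have hsum : ∀ x ∈ s, ∑' i, (X i).indicator (fun _ => a) x
      = ∑ i ∈ S, (X i).indicator (fun _ => a) x := fun x hx =>
    tsum_eq_sum fun i hi => Set.indicator_of_notMem (Set.disjoint_left.1 (hS i hi) hx) _
  rw [setIntegral_congr_fun hs hsum, integral_finsetSum]
  · refine Finset.sum_congr rfl fun i _ => ?_
    rw [setIntegral_indicator (hX i), setIntegral_const, smul_eq_mul, mul_comm]
  · exact fun i _ => ((integrableOn_const (hXfin i)).integrable_indicator (hX i)).integrableOn

theorem setIntegral_tsum_indicator_le_card (hX : ∀ i, MeasurableSet (X i))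
    (hXO : ∀ i, μ (X i) = μ O) (hO : μ O ≠ ⊤) (hs : MeasurableSet s) {S : Finset ι}
    (hS : ∀ i ∉ S, Disjoint s (X i)) :
    ∫ x in s, ∑' i, (X i).indicator (fun _ => (μ O).toReal⁻¹) x ∂μ ≤ S.card := by
  rw [setIntegral_tsum_indicator_const hX (fun i => hXO i ▸ hO) hs hS]
  refine (Finset.sum_le_card_nsmul _ _ 1 fun i _ => ?_).trans_eq (by simp)
  calc (μ O).toReal⁻¹ * μ.real (s ∩ X i) ≤ (μ O).toReal⁻¹ * μ.real (X i) := by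
        gcongr
        · exact hXO i ▸ hO
        · exact Set.inter_subset_right
    _ ≤ 1 := by
        rw [measureReal_def, hXO]
        exact inv_mul_le_one_of_le₀ le_rfl ENNReal.toReal_nonneg

theorem card_le_setIntegral_tsum_indicator (hX : ∀ i, MeasurableSet (X i))
    (hXO : ∀ i, μ (X i) = μ O) (hO₀ : μ O ≠ 0) (hO : μ O ≠ ⊤) (hs : MeasurableSet s)
    {S T : Finset ι} (hT : ∀ i ∉ T, Disjoint s (X i)) (hS : ∀ i ∈ S, X i ⊆ s) :
    S.card ≤ ∫ x in s, ∑' i, (X i).indicator (fun _ => (μ O).toReal⁻¹) x ∂μ := by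
  have hterm : ∀ i ∈ S, (μ O).toReal⁻¹ * μ.real (s ∩ X i) = 1 := fun i hi => by
    rw [Set.inter_eq_right.2 (hS i hi), measureReal_def, hXO]
    exact inv_mul_cancel₀ (ENNReal.toReal_ne_zero.2 ⟨hO₀, hO⟩)
  have hST : S ⊆ T := fun i hi => by
    by_contra hiT
    have hXi : X i = ∅ :=
      Set.subset_empty_iff.1 fun x hx => (hT i hiT).ne_of_mem (hS i hi hx) hx rfl
    exact hO₀ (hXO i ▸ hXi ▸ measure_empty)
  rw [setIntegral_tsum_indicator_const hX (fun i => hXO i ▸ hO) hs hT]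
  calc (S.card : ℝ) = ∑ i ∈ S, (μ O).toReal⁻¹ * μ.real (s ∩ X i) := by
        rw [Finset.sum_congr rfl hterm, Finset.sum_const, nsmul_one]
    _ ≤ ∑ i ∈ T, (μ O).toReal⁻¹ * μ.real (s ∩ X i) :=
        Finset.sum_le_sum_of_subset_of_nonneg hST fun _ _ _ => by positivity

end IndicatorSums

namespace Subgroup

variable {G : Type*} [Group G] (H : Subgroup G) (y : G)

theorem preimage_inter_image_mul_right (A : Set G) :
    (fun γ : H => (γ : G) * y) ⁻¹' (A ∩ (· * y) '' (H : Set G)) = {γ : H | (γ : G) * y ∈ A} :=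
  Set.ext fun γ => and_iff_left ⟨γ, γ.2, rfl⟩

theorem injective_mul_right : Function.Injective fun γ : H => (γ : G) * y :=
  fun _ _ hab => Subtype.ext (mul_right_cancel hab)

theorem ncard_inter_image_mul_right (A : Set G) :
    (A ∩ (· * y) '' (H : Set G)).ncard = {γ : H | (γ : G) * y ∈ A}.ncard := by
  rw [← H.preimage_inter_image_mul_right y A,
    Set.ncard_preimage_of_injective_subset_range (H.injective_mul_right y)]
  rintro _ ⟨-, g, hg, rfl⟩
  exact ⟨⟨g, hg⟩, rfl⟩

end Subgroup

theorem stmt18_general {G : Type*} [Group G] [MetricSpace G]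
    [MeasurableSpace G] [BorelSpace G]
    (vol : Measure G) [vol.IsHaarMeasure]
    (hdist : ∀ g x y : G, dist (g * x) (g * y) = dist x y)
    (B : ℝ → Set G) (hBmeas : ∀ t, MeasurableSet (B t))
    (t₀ ε₀ c : ℝ) (hc : 0 < c)
    (hadm : ∀ t, t₀ ≤ t → ∀ ε, 0 < ε → ε ≤ ε₀ →
      Metric.ball (1 : G) ε * B t * Metric.ball (1 : G) ε ⊆ B (t + c * ε))
    (Γ' : Subgroup G) (y : G)
    (hfin : ∀ t, (B t ∩ (· * y) '' (Γ' : Set G)).Finite)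
    (ε t : ℝ) (hε : 0 < ε) (hεle : ε ≤ ε₀) (ht : t₀ + c * ε₀ ≤ t)
    (hball : 0 < vol (Metric.ball (1 : G) ε))
    (hball' : vol (Metric.ball (1 : G) ε) < ⊤)
    (h : G) (hh : h ∈ Metric.ball (1 : G) ε) :
    (∫ g in B (t - c * ε),
        (∑' γ : Γ', (Metric.ball (1 : G) ε).indicator
          (fun _ => (vol (Metric.ball (1 : G) ε)).toReal⁻¹) (g⁻¹ * h * (γ : G) * y))
        ∂vol)
      ≤ ((B t ∩ (· * y) '' (Γ' : Set G)).ncard : ℝ) ∧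
    ((B t ∩ (· * y) '' (Γ' : Set G)).ncard : ℝ)
      ≤ ∫ g in B (t + c * ε),
          (∑' γ : Γ', (Metric.ball (1 : G) ε).indicator
            (fun _ => (vol (Metric.ball (1 : G) ε)).toReal⁻¹) (g⁻¹ * h * (γ : G) * y))
          ∂vol := by
  have : IsIsometricSMul G G := ⟨fun g => Isometry.of_dist_eq (hdist g)⟩
  have hX (γ : Γ') : vol (ball (h * ((γ : G) * y)) ε) = vol (ball 1 ε) := by
    rw [← measure_smul vol (h * ((γ : G) * y)) (ball 1 ε), Metric.smul_ball, smul_eq_mul,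
      mul_one]
  have hF (s : ℝ) : {γ : Γ' | (γ : G) * y ∈ B s}.Finite :=
    Γ'.preimage_inter_image_mul_right y (B s) ▸
      (hfin s).preimage (Γ'.injective_mul_right y).injOn
  have hcε : c * ε ≤ c * ε₀ := by gcongr
  have hcε₀ : 0 < c * ε := mul_pos hc hε
  have hlow (γ : Γ') (hγ : γ ∉ (hF t).toFinset) :
      Disjoint (B (t - c * ε)) (ball (h * (γ * y)) ε) := by
    by_contra hne
    have := mem_of_ball_mul_mul_ball_subset (hadm _ (by linarith) ε hε hεle) hh hne
    rw [sub_add_cancel] at this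
    exact hγ ((hF t).mem_toFinset.2 this)
  -- The balls meeting `B (t + c * ε)` come from `γ y ∈ B (t + 2 c ε)`, a finite set, so the
  -- integrand there is a finite sum (and the Bochner integral is not the junk value `0`).
  have hup (γ : Γ') (hγ : γ ∉ (hF (t + c * ε + c * ε)).toFinset) :
      Disjoint (B (t + c * ε)) (ball (h * (γ * y)) ε) := by
    by_contra hne
    exact hγ ((hF _).mem_toFinset.2 (mem_of_ball_mul_mul_ball_subset
      (hadm _ (by linarith) ε hε hεle) hh hne))
  have hin (γ : Γ') (hγ : γ ∈ (hF t).toFinset) : ball (h * (γ * y)) ε ⊆ B (t + c * ε) :=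
    ball_mul_subset_of_ball_mul_mul_ball_subset (hadm _ (by linarith) ε hε hεle) hh
      ((hF t).mem_toFinset.1 hγ)
  simp_rw [mul_assoc, indicator_ball_one_inv_mul]
  rw [Γ'.ncard_inter_image_mul_right, Set.ncard_eq_toFinset_card _ (hF t)]
  exact ⟨setIntegral_tsum_indicator_le_card (fun _ => measurableSet_ball) hX hball'.ne
      (hBmeas _) hlow,
    card_le_setIntegral_tsum_indicator (fun _ => measurableSet_ball) hX hball.ne' hball'.ne
      (hBmeas _) hup hin⟩

/-- Lemma 3.5: counting versus averaging.  Let `G` carry a Haar measure `vol`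
(inverse-invariant, i.e. `G` unimodular in the relevant sense) and a left-invariant
metric; let `B t` be an admissible family (`O_ε · B_t · O_ε ⊆ B_{t+cε}`), `Γ'` a
discrete (countable) subgroup, `y ∈ G`, `χ_ε = 1_{O_ε}/vol(O_ε)` and
`φ^y_ε(x) = ∑_{γ ∈ Γ'} χ_ε(x γ y)`.  Then for every `h ∈ O_ε`,
`∫_{B_{t−cε}} φ^y_ε(g⁻¹h) dvol(g) ≤ |B_t ∩ Γ'y| ≤ ∫_{B_{t+cε}} φ^y_ε(g⁻¹h) dvol(g)`. -/
theorem stmt18 {G : Type*} [Group G] [MetricSpace G] [IsTopologicalGroup G]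
    [MeasurableSpace G] [BorelSpace G]
    (vol : Measure G) [vol.IsHaarMeasure] [vol.IsInvInvariant]
    (hdist : ∀ g x y : G, dist (g * x) (g * y) = dist x y)
    (B : ℝ → Set G) (hBmeas : ∀ t, MeasurableSet (B t))
    (t₀ ε₀ c : ℝ) (hc : 0 < c) (hε₀ : 0 < ε₀)
    (hadm : ∀ t, t₀ ≤ t → ∀ ε, 0 < ε → ε ≤ ε₀ →
      Metric.ball (1 : G) ε * B t * Metric.ball (1 : G) ε ⊆ B (t + c * ε))
    (Γ' : Subgroup G) [Countable Γ'] (y : G)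
    (hfin : ∀ t, (B t ∩ (· * y) '' (Γ' : Set G)).Finite)
    (ε t : ℝ) (hε : 0 < ε) (hεle : ε ≤ ε₀) (ht : t₀ + c * ε₀ ≤ t)
    (hball : 0 < vol (Metric.ball (1 : G) ε))
    (hball' : vol (Metric.ball (1 : G) ε) < ⊤)
    (h : G) (hh : h ∈ Metric.ball (1 : G) ε) :
    (∫ g in B (t - c * ε),
        (∑' γ : Γ', (Metric.ball (1 : G) ε).indicator
          (fun _ => (vol (Metric.ball (1 : G) ε)).toReal⁻¹) (g⁻¹ * h * (γ : G) * y))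
        ∂vol)
      ≤ ((B t ∩ (· * y) '' (Γ' : Set G)).ncard : ℝ) ∧
    ((B t ∩ (· * y) '' (Γ' : Set G)).ncard : ℝ)
      ≤ ∫ g in B (t + c * ε),
          (∑' γ : Γ', (Metric.ball (1 : G) ε).indicator
            (fun _ => (vol (Metric.ball (1 : G) ε)).toReal⁻¹) (g⁻¹ * h * (γ : G) * y))
          ∂vol :=
  stmt18_general vol hdist B hBmeas t₀ ε₀ c hc hadm Γ' y hfin ε t hε hεle ht hball hball' h hh
end
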